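/- For D̃4, the positive real roots v with L(v) = v_1+v_2+v_3+v_4−2v_0 ≠ 0 (the positive singular roots) form exactly five orbits under the group generated by the Coxeter maps c• and c∘ acting on positive vectors, namely the orbits of the five coordinate vectors e_1, e_2, e_3, e_4, e_0. In particular every positive singular root is obtained from some coordinate vector by a finite alternating composition of c• and c∘. -/

import Mathlib

/-- Tits form of D̃₄, coordinates (v₁,v₂,v₃,v₄,v₀): leaves 0,1,2,3, center 4. -/
def qD4 (x : Fin 5 → ℤ) : ℤ :=
  (∑ i, x i ^ 2) - x 4 * (x 0 + x 1 + x 2 + x 3)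

/-- c• = σ₁σ₂σ₃σ₄ : vᵢ ↦ −vᵢ + v₀ at each leaf. -/
def cBulletD4 (x : Fin 5 → ℤ) : Fin 5 → ℤ :=
  ![x 4 - x 0, x 4 - x 1, x 4 - x 2, x 4 - x 3, x 4]

/-- c∘ = σ₀ : v₀ ↦ −v₀ + v₁+v₂+v₃+v₄ at the center. -/
def cCircD4 (x : Fin 5 → ℤ) : Fin 5 → ℤ :=
  ![x 0, x 1, x 2, x 3, x 0 + x 1 + x 2 + x 3 - x 4]

/-- Apply a finite composition (word) of the maps c• (true) and c∘ (false). Since c•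
and c∘ are involutions, such words realise the whole group they generate. -/
def applyWordD4 : List Bool → (Fin 5 → ℤ) → (Fin 5 → ℤ)
  | [], x => x
  | b :: w, x => (if b then cBulletD4 else cCircD4) (applyWordD4 w x)

/-!
Both `c•` and `c∘` preserve `q` and negate `L`. When `L v < 0`, `c∘` lowers the center
coordinate, and when `L v > 0`, `c•` lowers the leaf sum; since `q v ≤ 1`, the image stays
nonnegative unless `∑ vᵢ² ≤ 1`, i.e. unless `v` is already a coordinate vector. This descent on
the coordinate sum gives existence. For uniqueness, the leaf differences
`(v₁ - v₂, v₁ - v₃, v₁ - v₄)` are fixed by `c∘` and negated by `c•`, and already separate the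
five coordinate vectors up to sign.
-/

open Finset

lemma Int.exists_eq_single_of_sum_sq_le_one {ι : Type*} [Fintype ι] [DecidableEq ι]
    {x : ι → ℤ} (hpos : ∀ i, 0 ≤ x i) (hx : x ≠ 0) (hsq : ∑ i, x i ^ 2 ≤ 1) :
    ∃ i, x = Pi.single i 1 := by
  obtain ⟨i, hi⟩ : ∃ i, x i ≠ 0 := Function.ne_iff.1 hx
  have hsplit := add_sum_erase univ (fun j => x j ^ 2) (mem_univ i)
  have hrest : 0 ≤ ∑ j ∈ univ.erase i, x j ^ 2 := sum_nonneg fun j _ => sq_nonneg (x j)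
  have hxi : x i = 1 := by
    have := (hpos i).lt_of_ne' hi
    nlinarith
  have hrest0 : ∑ j ∈ univ.erase i, x j ^ 2 = 0 := by nlinarith
  refine ⟨i, funext fun j => ?_⟩
  rcases eq_or_ne j i with rfl | hj
  · simp [hxi]
  · have := (sum_eq_zero_iff_of_nonneg fun j _ => sq_nonneg (x j)).1 hrest0 j (by simp [hj])
    simpa [hj] using this

/-- The linear functional `L` of the paper. -/
def defectD4 (x : Fin 5 → ℤ) : ℤ := x 0 + x 1 + x 2 + x 3 - 2 * x 4

def leafDiffD4 (x : Fin 5 → ℤ) : ℤ × ℤ × ℤ := (x 0 - x 1, x 0 - x 2, x 0 - x 3)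

lemma qD4_cBulletD4 (x : Fin 5 → ℤ) : qD4 (cBulletD4 x) = qD4 x := by
  simp [qD4, cBulletD4, Fin.sum_univ_five]; ring

lemma qD4_cCircD4 (x : Fin 5 → ℤ) : qD4 (cCircD4 x) = qD4 x := by
  simp [qD4, cCircD4, Fin.sum_univ_five]; ring

lemma cBulletD4_involutive : Function.Involutive cBulletD4 := fun x => by
  funext i; fin_cases i <;> simp [cBulletD4]

lemma cCircD4_involutive : Function.Involutive cCircD4 := fun x => by
  funext i; fin_cases i <;> simp [cCircD4]

lemma defectD4_cBulletD4 (x : Fin 5 → ℤ) : defectD4 (cBulletD4 x) = -defectD4 x := by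
  simp [defectD4, cBulletD4]; ring

lemma defectD4_cCircD4 (x : Fin 5 → ℤ) : defectD4 (cCircD4 x) = -defectD4 x := by
  simp [defectD4, cCircD4]; ring

lemma leafDiffD4_cBulletD4 (x : Fin 5 → ℤ) : leafDiffD4 (cBulletD4 x) = -leafDiffD4 x := by
  simp [leafDiffD4, cBulletD4]

lemma leafDiffD4_cCircD4 (x : Fin 5 → ℤ) : leafDiffD4 (cCircD4 x) = leafDiffD4 x := rfl

lemma leafDiffD4_applyWordD4 (w : List Bool) (x : Fin 5 → ℤ) :
    leafDiffD4 (applyWordD4 w x) = leafDiffD4 x ∨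
      leafDiffD4 (applyWordD4 w x) = -leafDiffD4 x := by
  induction w with
  | nil => exact .inl rfl
  | cons b w ih =>
    cases b
    · simpa [applyWordD4, leafDiffD4_cCircD4] using ih
    · simpa [applyWordD4, leafDiffD4_cBulletD4, neg_eq_iff_eq_neg, or_comm] using ih

lemma leafDiffD4_single_injective_up_to_sign {g g' : Fin 5}
    (h : leafDiffD4 (Pi.single g 1) = leafDiffD4 (Pi.single g' 1) ∨
      leafDiffD4 (Pi.single g 1) = -leafDiffD4 (Pi.single g' 1)) : g = g' := by
  revert h; fin_cases g <;> fin_cases g' <;> decide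

lemma leaf_le_center_of_qD4_le_one {x : Fin 5 → ℤ} (hpos : ∀ i, 0 ≤ x i) (hq : qD4 x ≤ 1)
    (h4 : x 4 ≠ 0) (i : Fin 5) : x i ≤ x 4 := by
  simp only [qD4, Fin.sum_univ_five] at hq
  have h4 : 1 ≤ x 4 := (hpos 4).lt_of_ne' h4
  -- `4 q = 4 xᵢ (xᵢ - x₄) + x₄² + Σ_{j ≠ i} (2 xⱼ - x₄)²` over the leaves `j`
  fin_cases i <;> dsimp <;> by_contra! h <;>
    nlinarith [sq_nonneg (2 * x 0 - x 4), sq_nonneg (2 * x 1 - x 4),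
      sq_nonneg (2 * x 2 - x 4), sq_nonneg (2 * x 3 - x 4)]

lemma sum_sq_le_one_of_leafSum_lt_center {x : Fin 5 → ℤ} (hpos : ∀ i, 0 ≤ x i)
    (hq : qD4 x ≤ 1) (hlt : x 0 + x 1 + x 2 + x 3 < x 4) : ∑ i, x i ^ 2 ≤ 1 := by
  simp only [qD4, Fin.sum_univ_five] at hq ⊢
  have h4 : 1 ≤ x 4 := by linarith [hpos 0, hpos 1, hpos 2, hpos 3]
  have : 1 ≤ x 4 * (x 4 - (x 0 + x 1 + x 2 + x 3)) :=
    one_le_mul_of_one_le_of_one_le h4 (by linarith)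
  nlinarith [hpos 0, hpos 1, hpos 2, hpos 3]

lemma exists_applyWordD4_single_eq {v : Fin 5 → ℤ} (hpos : ∀ i, 0 ≤ v i)
    (hroot : qD4 v ≤ 1) (hsing : defectD4 v ≠ 0) :
    ∃ g : Fin 5, ∃ w : List Bool, applyWordD4 w (Pi.single g 1) = v := by
  have hne : v ≠ 0 := by rintro rfl; simp [defectD4] at hsing
  rcases hsing.lt_or_gt with hL | hL
  · by_cases hS : v 4 ≤ v 0 + v 1 + v 2 + v 3
    · have hpos' : ∀ i, 0 ≤ cCircD4 v i := by
        intro i; fin_cases i <;> simp [cCircD4, hpos, hS]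
      obtain ⟨g, w, hw⟩ := exists_applyWordD4_single_eq hpos' (by rwa [qD4_cCircD4])
        (by rwa [defectD4_cCircD4, neg_ne_zero])
      exact ⟨g, false :: w, by simp [applyWordD4, hw, cCircD4_involutive v]⟩
    · obtain ⟨g, rfl⟩ := Int.exists_eq_single_of_sum_sq_le_one hpos hne
        (sum_sq_le_one_of_leafSum_lt_center hpos hroot (not_le.1 hS))
      exact ⟨g, [], rfl⟩
  · by_cases h4 : v 4 = 0
    · have hsq : ∑ i, v i ^ 2 ≤ 1 := by
        simpa [qD4, Fin.sum_univ_five, h4] using hroot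
      obtain ⟨g, rfl⟩ := Int.exists_eq_single_of_sum_sq_le_one hpos hne hsq
      exact ⟨g, [], rfl⟩
    · have hpos' : ∀ i, 0 ≤ cBulletD4 v i := by
        have := leaf_le_center_of_qD4_le_one hpos hroot h4
        intro i; fin_cases i <;> simp [cBulletD4, this, hpos]
      obtain ⟨g, w, hw⟩ := exists_applyWordD4_single_eq hpos' (by rwa [qD4_cBulletD4])
        (by rwa [defectD4_cBulletD4, neg_ne_zero])
      exact ⟨g, true :: w, by simp [applyWordD4, hw, cBulletD4_involutive v]⟩
termination_by (∑ i, v i).toNat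
decreasing_by
  all_goals
    have := hpos 0; have := hpos 1; have := hpos 2; have := hpos 3; have := hpos 4
    simp only [Fin.sum_univ_five, cCircD4, cBulletD4, defectD4, Matrix.cons_val_zero,
      Matrix.cons_val_one, Matrix.cons_val] at *
    omega

lemma eq_of_applyWordD4_single_eq {g g' : Fin 5} {w w' : List Bool}
    (h : applyWordD4 w (Pi.single g 1) = applyWordD4 w' (Pi.single g' 1)) : g = g' := by
  apply leafDiffD4_single_injective_up_to_sign
  rcases leafDiffD4_applyWordD4 w (Pi.single g 1) with hw | hw <;>
    rcases leafDiffD4_applyWordD4 w' (Pi.single g' 1) with hw' | hw' <;>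
    rw [h, hw'] at hw
  exacts [.inl hw.symm, .inr hw.symm, .inr (neg_eq_iff_eq_neg.2 hw).symm,
    .inl (neg_inj.1 hw).symm]

theorem stmt10_general (v : Fin 5 → ℤ) (hpos : ∀ i, 0 ≤ v i)
    (hroot : qD4 v ≤ 1) (hsing : v 0 + v 1 + v 2 + v 3 - 2 * v 4 ≠ 0) :
    ∃! g : Fin 5, ∃ w : List Bool, applyWordD4 w (Pi.single g 1) = v := by
  obtain ⟨g, w, hw⟩ := exists_applyWordD4_single_eq hpos hroot hsing
  refine ⟨g, ⟨w, hw⟩, fun g' ⟨w', hw'⟩ => ?_⟩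
  exact (eq_of_applyWordD4_single_eq (hw.trans hw'.symm)).symm

/-- Every positive singular root of D̃₄ (positive root with L(v) ≠ 0) lies in the
orbit, under the group generated by c• and c∘, of exactly one of the five coordinate
vectors; in particular it is obtained from a coordinate vector by a finite
composition of c• and c∘. -/
theorem stmt10 (v : Fin 5 → ℤ) (hpos : ∀ i, 0 ≤ v i) (hne : v ≠ 0)
    (hroot : qD4 v ≤ 1) (hsing : v 0 + v 1 + v 2 + v 3 - 2 * v 4 ≠ 0) :
    ∃! g : Fin 5, ∃ w : List Bool, applyWordD4 w (Pi.single g 1) = v :=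
  stmt10_general v hpos hroot hsing
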